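/- arXiv:2509.13041 — 6 statements merged into one kernel-verified Lean document; each statement's English description precedes it below -/
import Mathlib

section
/- Let ν be a probability measure on ℝ with finite first moment, centered at 0, such that S(ν) := sup supp(ν) < ∞ and ν({S(ν)}) ≥ β for some β ∈ (0,1) (i.e. ν is atomic β-biased). If ν ≠ δ₀, then writing ν^L := ν restricted to (-∞, m) and ν^R := ν restricted to [m, ∞) where m = 0 is the barycenter, and B_x := (−bar(ν^L))/(x − bar(ν^L)) for x ∈ [0, S(ν)], one has B_x ≥ β for all x ∈ [0, S(ν)]. -/
/-!
Let `p = ν(-∞, 0)` and `I = ∫_{(-∞,0)} y dν < 0`, so that `bar(ν^L) = I / p` and the claim reads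
`β (x p - I) ≤ -I`. Centering gives `-I = ∫_{[0,∞)} y dν ≥ S ν{S} ≥ β x`, while the atom at
`S ≥ 0` is disjoint from `(-∞, 0)`, so `p ≤ 1 - ν{S} ≤ 1 - β`. Multiplying the two bounds gives
`β x p ≤ -I (1 - β)`.
-/

open MeasureTheory ProbabilityTheory Set

noncomputable section

/-- Topological support of a measure on `ℝ`: points all of whose neighborhoods have
positive measure. -/
def msupp (ν : Measure ℝ) : Set ℝ := {x : ℝ | ∀ ε > 0, 0 < ν (Metric.ball x ε)}

/-- `S(ν)`, the supremum of the support. -/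
def Ssup (ν : Measure ℝ) : ℝ := sSup (msupp ν)

/-- `s(ν)`, the infimum of the support. -/
def sinf (ν : Measure ℝ) : ℝ := sInf (msupp ν)

/-- Barycenter of a finite measure. -/
def barOf (ν : Measure ℝ) : ℝ := (∫ y, y ∂ν) / (ν Set.univ).toReal

/-- A probability measure centered at `0` is simple `β`-biased if its restriction to
`[0,∞)` is a single atom of mass at least `β`. -/
def IsSimpleBiased (β : ℝ) (ν : Measure ℝ) : Prop :=
  IsProbabilityMeasure ν ∧ Integrable id ν ∧ (∫ y, y ∂ν) = 0 ∧
  ∃ M : ℝ, 0 ≤ M ∧ ν.restrict (Set.Ici 0) = ν {M} • Measure.dirac M ∧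
    ENNReal.ofReal β ≤ ν {M}

/-- A probability measure centered at `0` is atomic `β`-biased if its support is bounded
above and it has an atom of mass at least `β` at the maximum of its support. -/
def IsAtomicBiased (β : ℝ) (ν : Measure ℝ) : Prop :=
  IsProbabilityMeasure ν ∧ Integrable id ν ∧ (∫ y, y ∂ν) = 0 ∧
  BddAbove (msupp ν) ∧ ENNReal.ofReal β ≤ ν {Ssup ν}

/-- `ν` is a mixture of measures satisfying `P`. -/
def IsMixtureOf (ν : Measure ℝ) (P : Measure ℝ → Prop) : Prop :=
  ∃ ρ : Measure ℝ, IsProbabilityMeasure ρ ∧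
    ∃ κ : ProbabilityTheory.Kernel ℝ ℝ, IsMarkovKernel κ ∧
      (∀ x : ℝ, P (κ x)) ∧ ν = ρ.bind (fun x => κ x)

/-- `β`-biased probability measure (centered at `0`). -/
def IsBiased (β : ℝ) (ν : Measure ℝ) : Prop := IsMixtureOf ν (IsAtomicBiased β)

/-- `β`-biased around `x`. -/
def IsBiasedAround (β x : ℝ) (ν : Measure ℝ) : Prop :=
  IsBiased β (ν.map (fun y => y - x))

/-- Strongly `β`-biased probability measure (centered at `0`). -/
def IsStronglyBiased (β : ℝ) (ν : Measure ℝ) : Prop :=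
  ∃ ρ : Measure ℝ, IsProbabilityMeasure ρ ∧
    ∃ κ : ProbabilityTheory.Kernel ℝ ℝ, IsMarkovKernel κ ∧
      ∃ γ : ℝ → ℝ, (∀ x : ℝ, β < γ x ∧ IsSimpleBiased (γ x) (κ x)) ∧
        ν = ρ.bind (fun x => κ x)

/-- Strongly `β`-biased around `x`. -/
def IsStronglyBiasedAround (β x : ℝ) (ν : Measure ℝ) : Prop :=
  IsStronglyBiased β (ν.map (fun y => y - x))

/-- Convex order between finite measures on `ℝ`. -/
def ConvexOrder (μ ν : Measure ℝ) : Prop :=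
  ∀ φ : ℝ → ℝ, ConvexOn ℝ Set.univ φ → Integrable φ μ → Integrable φ ν →
    ∫ y, φ y ∂μ ≤ ∫ y, φ y ∂ν

/-- The distorted reflection `R^β`. -/
def Rbeta (β : ℝ) : ℝ → ℝ := fun x =>
  if 0 ≤ x then -(β / (1 - β)) * x else -((1 - β) / β) * x

/-- The transform `Z^β`. -/
def Zbeta (β : ℝ) (f : ℝ → ℝ) : ℝ → ℝ := fun x =>
  if 0 < x then ((1 - β) / β) * f ((β / (1 - β)) * x) else f x

/-- The `β`-biased order `μ ≼_β ν`: existence of a kernel `κ` with `ν = μ.bind κ` such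
that `κ x` is `β`-biased around `x` for `μ`-a.e. `x`. -/
def BiasedOrder (β : ℝ) (μ ν : Measure ℝ) : Prop :=
  ∃ κ : ProbabilityTheory.Kernel ℝ ℝ, IsMarkovKernel κ ∧
    (∀ᵐ x ∂μ, IsBiasedAround β x (κ x)) ∧ ν = μ.bind (fun x => κ x)

/-- The strong `β`-biased order `μ ≼_{sβ} ν`. -/
def StrongBiasedOrder (β : ℝ) (μ ν : Measure ℝ) : Prop :=
  ∃ κ : ProbabilityTheory.Kernel ℝ ℝ, IsMarkovKernel κ ∧
    (∀ᵐ x ∂μ, IsStronglyBiasedAround β x (κ x)) ∧ ν = μ.bind (fun x => κ x)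

/-- The 1-Wasserstein distance between probability measures on `ℝ`. -/
def W1 (μ ν : Measure ℝ) : ℝ :=
  sInf {c : ℝ | ∃ π : Measure (ℝ × ℝ), IsProbabilityMeasure π ∧
    π.map Prod.fst = μ ∧ π.map Prod.snd = ν ∧
    Integrable (fun p => |p.1 - p.2|) π ∧ c = ∫ p, |p.1 - p.2| ∂π}

/-- `η` is a regular conditional law of `X` given the sub-σ-algebra `m₀`. -/
def IsCondLaw {Ω : Type*} [mΩ : MeasurableSpace Ω] (m₀ : MeasurableSpace Ω)
    (P : Measure Ω) (X : Ω → ℝ) (η : Ω → Measure ℝ) : Prop :=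
  (∀ ω, IsProbabilityMeasure (η ω)) ∧
  ∀ B : Set ℝ, MeasurableSet B →
    (fun ω => (η ω B).toReal) =ᵐ[P] P[(X ⁻¹' B).indicator (fun _ => (1 : ℝ))|m₀]

lemma le_neg_div_sub_of_mul_le {t x p I : ℝ} (hx : 0 ≤ x) (hI : I < 0) (hp : 0 < p)
    (hp_le : p ≤ 1 - t) (htx : t * x ≤ -I) :
    t ≤ -(I / p) / (x - I / p) := by
  have hden : 0 < x * p - I := by nlinarith
  have hrw : -(I / p) / (x - I / p) = -I / (x * p - I) := by
    field_simp
  rw [hrw, le_div_iff₀ hden]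
  nlinarith [mul_le_mul_of_nonneg_right htx hp.le,
    mul_le_mul_of_nonneg_left hp_le (neg_nonneg.2 hI.le)]

lemma barOf_restrict (ν : Measure ℝ) (s : Set ℝ) :
    barOf (ν.restrict s) = (∫ y in s, y ∂ν) / ν.real s := by
  simp only [barOf, Measure.restrict_apply_univ, measureReal_def]

section

variable {ν : Measure ℝ}

lemma measure_Iio_zero_pos [IsProbabilityMeasure ν] (hint : Integrable id ν)
    (hbar : ∫ y, y ∂ν = 0) (hne : ν ≠ Measure.dirac 0) : 0 < ν (Iio 0) := by
  refine pos_iff_ne_zero.2 fun h0 => hne ?_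
  have hnonneg : 0 ≤ᵐ[ν] (id : ℝ → ℝ) := by
    rw [Filter.EventuallyLE, ae_iff]
    simp only [id, Pi.zero_apply, not_le]
    exact h0
  have hzero : (id : ℝ → ℝ) =ᵐ[ν] fun _ => 0 :=
    (integral_eq_zero_iff_of_nonneg_ae hnonneg hint).1 hbar
  calc ν = ν.map id := Measure.map_id.symm
    _ = ν.map fun _ => 0 := Measure.map_congr hzero
    _ = Measure.dirac 0 := by simp [Measure.map_const]

lemma setIntegral_Iio_zero_neg (hint : IntegrableOn id (Iio 0) ν) (hpos : 0 < ν (Iio 0)) :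
    ∫ y in Iio 0, y ∂ν < 0 := by
  have hneg : 0 < ∫ y in Iio 0, -y ∂ν := by
    have hint_neg : IntegrableOn (fun y : ℝ => -y) (Iio 0) ν := hint.neg
    rw [setIntegral_pos_iff_support_of_nonneg_ae _ hint_neg]
    · refine hpos.trans_le (measure_mono fun y hy => ⟨?_, hy⟩)
      simpa using (mem_Iio.1 hy).ne
    · filter_upwards [ae_restrict_mem measurableSet_Iio] with y hy
      exact neg_nonneg.2 (mem_Iio.1 hy).le
  rw [integral_neg] at hneg
  exact neg_pos.1 hneg

lemma setIntegral_Ici_zero_eq_neg (hint : Integrable id ν) (hbar : ∫ y, y ∂ν = 0) :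
    ∫ y in Ici 0, y ∂ν = -∫ y in Iio 0, y ∂ν := by
  have h := integral_add_compl (measurableSet_Iio (a := (0 : ℝ))) hint
  rw [compl_Iio] at h
  simp only [id] at h
  linarith

lemma measureReal_singleton_mul_le_setIntegral_Ici_zero {S : ℝ} (hS : 0 ≤ S)
    (hint : IntegrableOn id (Ici 0) ν) :
    ν.real {S} * S ≤ ∫ y in Ici 0, y ∂ν := by
  rw [← smul_eq_mul, ← integral_singleton (fun y : ℝ => y)]
  refine setIntegral_mono_set hint ?_ (singleton_subset_iff.2 (mem_Ici.2 hS)).eventuallyLE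
  filter_upwards [ae_restrict_mem measurableSet_Ici] with y hy using hy

lemma measureReal_Iio_zero_add_measureReal_singleton_le_one [IsProbabilityMeasure ν] {S : ℝ}
    (hS : 0 ≤ S) : ν.real (Iio 0) + ν.real {S} ≤ 1 := by
  have hdisj : Disjoint (Iio (0 : ℝ)) {S} := by simpa using hS
  rw [← measureReal_union hdisj (measurableSet_singleton S)]
  exact measureReal_le_one

lemma measureReal_singleton_le_neg_barOf_div [IsProbabilityMeasure ν] (hint : Integrable id ν)
    (hbar : ∫ y, y ∂ν = 0) (hne : ν ≠ Measure.dirac 0) {x S : ℝ} (hx : 0 ≤ x) (hxS : x ≤ S) :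
    ν.real {S} ≤ -barOf (ν.restrict (Iio 0)) / (x - barOf (ν.restrict (Iio 0))) := by
  have hS : 0 ≤ S := hx.trans hxS
  have hpos := measure_Iio_zero_pos hint hbar hne
  rw [barOf_restrict]
  refine le_neg_div_sub_of_mul_le hx (setIntegral_Iio_zero_neg hint.integrableOn hpos)
    (ENNReal.toReal_pos hpos.ne' (measure_ne_top _ _)) ?_ ?_
  · linarith [measureReal_Iio_zero_add_measureReal_singleton_le_one (ν := ν) hS]
  · calc ν.real {S} * x ≤ ν.real {S} * S := mul_le_mul_of_nonneg_left hxS measureReal_nonneg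
      _ ≤ ∫ y in Ici 0, y ∂ν :=
        measureReal_singleton_mul_le_setIntegral_Ici_zero hS hint.integrableOn
      _ = -∫ y in Iio 0, y ∂ν := setIntegral_Ici_zero_eq_neg hint hbar

end

theorem stmt0_general (β : ℝ) (ν : Measure ℝ)
    (hprob : IsProbabilityMeasure ν) (hint : Integrable id ν)
    (hbar : (∫ y, y ∂ν) = 0)
    (hatom : ENNReal.ofReal β ≤ ν {Ssup ν}) (hne : ν ≠ Measure.dirac 0) :
    ∀ x ∈ Set.Icc (0 : ℝ) (Ssup ν),
      β ≤ (-(barOf (ν.restrict (Set.Iio 0)))) /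
        (x - barOf (ν.restrict (Set.Iio 0))) := by
  rintro x ⟨hx, hxS⟩
  have hβ_le : β ≤ ν.real {Ssup ν} := (ENNReal.ofReal_le_iff_le_toReal (measure_ne_top ν _)).1 hatom
  exact hβ_le.trans (measureReal_singleton_le_neg_barOf_div hint hbar hne hx hxS)

/-- for an atomic `β`-biased probability `ν ≠ δ₀`,
`B_x = (-bar ν^L)/(x - bar ν^L) ≥ β` for all `x ∈ [0, S(ν)]`. -/
theorem stmt0 (β : ℝ) (hβ : β ∈ Set.Ioo (0 : ℝ) 1) (ν : Measure ℝ)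
    (hprob : IsProbabilityMeasure ν) (hint : Integrable id ν)
    (hbar : (∫ y, y ∂ν) = 0) (hbdd : BddAbove (msupp ν))
    (hatom : ENNReal.ofReal β ≤ ν {Ssup ν}) (hne : ν ≠ Measure.dirac 0) :
    ∀ x ∈ Set.Icc (0 : ℝ) (Ssup ν),
      β ≤ (-(barOf (ν.restrict (Set.Iio 0)))) /
        (x - barOf (ν.restrict (Set.Iio 0))) :=
  stmt0_general β ν hprob hint hbar hatom hne

end
end

section
/- Every atomic β-biased probability measure ν on ℝ (centered at 0, with finite first moment) can be written as a mixture ν = ∫ ν_x ρ(dx) over a probability measure ρ, where each ν_x is a simple β-biased probability measure, i.e., ν_x is centered at 0 and ν_x restricted to [0,∞) consists of a single atom of mass at least β. -/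
open MeasureTheory ProbabilityTheory Set

noncomputable section

/-! Let `η = ν|(-∞,0)`, `m = η(ℝ)` and `I = ∫ (-y) dη`, which equals `∫_{[0,∞)} y dν` because `ν` is
centered. Every `t ≥ 0` is balanced against `η` by `(I δ_t + t η) / (m t + I)`: a centered
probability whose restriction to `[0,∞)` is the atom `I / (m t + I)` at `t`. Mixing these
against `(m t + I) / I · ν|[0,∞)(dt)` gives back `ν|[0,∞) + η = ν`. The atom of mass
`b ≥ β` at `S = S(ν)` forces `I ≥ S b` and `m ≤ 1 - b`, whence `I / (m t + I) ≥ β` for all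
`t ∈ [0, S]`; this interval carries all of `ν|[0,∞)`. If `ν` has no negative mass, it is `δ_0`. -/

lemma integrable_id_dirac (a : ℝ) : Integrable id (Measure.dirac a) :=
  (integrable_const a).congr (ae_eq_dirac id).symm

section BalancedAtom

variable {η : Measure ℝ} {t : ℝ}

def balancedAtom (η : Measure ℝ) (t : ℝ) : Measure ℝ :=
  ENNReal.ofReal ((∫ y, -y ∂η) / (η.real univ * t + ∫ y, -y ∂η)) • Measure.dirac t +
    ENNReal.ofReal (t / (η.real univ * t + ∫ y, -y ∂η)) • η

lemma measurable_balancedAtom : Measurable (balancedAtom η) := by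
  refine Measure.measurable_of_measurable_coe _ fun s hs => ?_
  simp only [balancedAtom, Measure.add_apply, Measure.smul_apply, smul_eq_mul]
  have : Measurable fun t : ℝ => Measure.dirac t s :=
    (Measure.measurable_coe hs).comp Measure.measurable_dirac
  fun_prop

lemma isProbabilityMeasure_balancedAtom [IsFiniteMeasure η] (hI : 0 < ∫ y, -y ∂η) (ht : 0 ≤ t) :
    IsProbabilityMeasure (balancedAtom η t) := by
  constructor
  simp only [balancedAtom, Measure.add_apply, Measure.smul_apply, smul_eq_mul, measure_univ,
    mul_one]
  rw [← ofReal_measureReal, ← ENNReal.ofReal_mul (by positivity),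
    ← ENNReal.ofReal_add (by positivity) (by positivity), ← ENNReal.ofReal_one]
  congr 1
  field_simp
  ring

lemma integrable_id_balancedAtom [IsFiniteMeasure η] (hint : Integrable id η) :
    Integrable id (balancedAtom η t) :=
  integrable_add_measure.2
    ⟨(integrable_id_dirac t).smul_measure ENNReal.ofReal_ne_top,
      hint.smul_measure ENNReal.ofReal_ne_top⟩

lemma integral_id_balancedAtom [IsFiniteMeasure η] (hint : Integrable id η)
    (hI : 0 < ∫ y, -y ∂η) (ht : 0 ≤ t) : ∫ y, y ∂balancedAtom η t = 0 := by
  rw [balancedAtom, integral_add_measure (f := fun y => y)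
    ((integrable_id_dirac t).smul_measure ENNReal.ofReal_ne_top)
    (hint.smul_measure ENNReal.ofReal_ne_top), integral_smul_measure, integral_smul_measure,
    integral_dirac, ENNReal.toReal_ofReal (by positivity), ENNReal.toReal_ofReal (by positivity),
    smul_eq_mul, smul_eq_mul, ← neg_neg (∫ y, y ∂η), ← integral_neg]
  ring

lemma balancedAtom_restrict_Ici (hη : η (Ici 0) = 0) (ht : 0 ≤ t) :
    (balancedAtom η t).restrict (Ici 0) =
      ENNReal.ofReal ((∫ y, -y ∂η) / (η.real univ * t + ∫ y, -y ∂η)) • Measure.dirac t := by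
  rw [balancedAtom, Measure.restrict_add, Measure.restrict_smul, Measure.restrict_smul,
    restrict_dirac' measurableSet_Ici, if_pos (mem_Ici.2 ht), Measure.restrict_eq_zero.2 hη,
    smul_zero, add_zero]

lemma balancedAtom_singleton (hη : η (Ici 0) = 0) (ht : 0 ≤ t) :
    balancedAtom η t {t} = ENNReal.ofReal ((∫ y, -y ∂η) / (η.real univ * t + ∫ y, -y ∂η)) := by
  have : η {t} = 0 := measure_mono_null (singleton_subset_iff.2 ht) hη
  simp [balancedAtom, this]

lemma isSimpleBiased_balancedAtom [IsFiniteMeasure η] {β : ℝ} (hint : Integrable id η)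
    (hη : η (Ici 0) = 0) (hI : 0 < ∫ y, -y ∂η) (ht : 0 ≤ t)
    (hβ : β * (η.real univ * t + ∫ y, -y ∂η) ≤ ∫ y, -y ∂η) :
    IsSimpleBiased β (balancedAtom η t) := by
  have hD : 0 < η.real univ * t + ∫ y, -y ∂η := by positivity
  refine ⟨isProbabilityMeasure_balancedAtom hI ht, integrable_id_balancedAtom hint,
    integral_id_balancedAtom hint hI ht, t, ht, ?_, ?_⟩
  · rw [balancedAtom_restrict_Ici hη ht, balancedAtom_singleton hη ht]
  · rw [balancedAtom_singleton hη ht]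
    exact ENNReal.ofReal_le_ofReal ((le_div_iff₀ hD).2 hβ)

lemma bind_withDensity_balancedAtom [IsFiniteMeasure η] {μ : Measure ℝ} (hμ : ∀ᵐ t ∂μ, 0 ≤ t)
    (hμint : Integrable id μ) (hI : 0 < ∫ y, -y ∂η) (hμI : ∫ t, t ∂μ = ∫ y, -y ∂η) :
    (μ.withDensity fun t => ENNReal.ofReal ((η.real univ * t + ∫ y, -y ∂η) / ∫ y, -y ∂η)).bind
      (balancedAtom η) = μ + η := by
  set I := ∫ y, -y ∂η with hI_def
  ext B hB
  have hweight : ∀ᵐ t ∂μ, ENNReal.ofReal ((η.real univ * t + I) / I) * balancedAtom η t B =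
      B.indicator 1 t + ENNReal.ofReal (t / I) * η B := by
    filter_upwards [hμ] with t ht
    have hD : 0 < η.real univ * t + I := by positivity
    rw [balancedAtom, ← hI_def, Measure.add_apply, Measure.smul_apply, Measure.smul_apply,
      smul_eq_mul, smul_eq_mul, Measure.dirac_apply' _ hB, mul_add, ← mul_assoc, ← mul_assoc,
      ← ENNReal.ofReal_mul (by positivity), ← ENNReal.ofReal_mul (by positivity)]
    have hdirac_coef : (η.real univ * t + I) / I * (I / (η.real univ * t + I)) = 1 := by
      field_simp
    have hη_coef : (η.real univ * t + I) / I * (t / (η.real univ * t + I)) = t / I := by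
      field_simp
    rw [hdirac_coef, hη_coef, ENNReal.ofReal_one, one_mul]
  rw [Measure.bind_apply hB measurable_balancedAtom.aemeasurable,
    lintegral_withDensity_eq_lintegral_mul _ (by fun_prop) (g := fun t => balancedAtom η t B)
      ((Measure.measurable_coe hB).comp measurable_balancedAtom)]
  simp only [Pi.mul_apply]
  rw [lintegral_congr_ae hweight, lintegral_add_left (measurable_one.indicator hB),
    lintegral_indicator_one hB, lintegral_mul_const _ (by fun_prop),
    ← ofReal_integral_eq_lintegral_ofReal (f := fun t => t / I) (hμint.div_const I)
      (hμ.mono fun t ht => by positivity),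
    integral_div, hμI, div_self hI.ne', ENNReal.ofReal_one, one_mul, Measure.add_apply]

end BalancedAtom

section CenteredMeasure

variable {ν : Measure ℝ}

lemma measure_Ioi_Ssup_eq_zero (hbdd : BddAbove (msupp ν)) : ν (Ioi (Ssup ν)) = 0 := by
  refine measure_null_of_locally_null _ fun x hx => ?_
  have hx' : x ∉ msupp ν := fun h => not_le.2 hx (le_csSup hbdd h)
  simp only [msupp, mem_ofPred_eq, not_forall, not_lt, nonpos_iff_eq_zero, exists_prop] at hx'
  obtain ⟨ε, hε, hball⟩ := hx'
  exact ⟨_, mem_nhdsWithin_of_mem_nhds (Metric.ball_mem_nhds x hε), hball⟩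

lemma eq_dirac_zero_of_measure_Iio_eq_zero [IsProbabilityMeasure ν] (hint : Integrable id ν)
    (hbar : ∫ y, y ∂ν = 0) (hneg : ν (Iio 0) = 0) : ν = Measure.dirac 0 := by
  have hnonneg : 0 ≤ᵐ[ν] fun y => y :=
    (measure_eq_zero_iff_ae_notMem.1 hneg).mono fun _ hy => not_lt.1 hy
  have hzero : (fun y : ℝ => y) =ᵐ[ν] fun _ => 0 :=
    (integral_eq_zero_iff_of_nonneg_ae hnonneg hint).1 hbar
  calc ν = ν.map id := Measure.map_id.symm
    _ = ν.map (fun _ => 0) := Measure.map_congr hzero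
    _ = Measure.dirac 0 := by simp [Measure.map_const]

lemma setIntegral_Ici_eq_setIntegral_Iio_neg (hint : Integrable id ν) (hbar : ∫ y, y ∂ν = 0) :
    ∫ y in Ici 0, y ∂ν = ∫ y in Iio 0, -y ∂ν := by
  have := integral_add_compl (f := fun y => y) (measurableSet_Iio (a := 0)) hint
  rw [compl_Iio, hbar] at this
  rw [integral_neg]
  linarith

lemma setIntegral_Iio_neg_pos (hint : Integrable id ν) (hneg : ν (Iio 0) ≠ 0) :
    0 < ∫ y in Iio 0, -y ∂ν := by
  have hnonneg : 0 ≤ᵐ[ν.restrict (Iio 0)] fun y => -y :=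
    ae_restrict_of_forall_mem measurableSet_Iio fun y hy => neg_nonneg.2 (le_of_lt hy)
  rw [setIntegral_pos_iff_support_of_nonneg_ae hnonneg hint.neg.integrableOn]
  have : Function.support (fun y : ℝ => -y) ∩ Iio 0 = Iio 0 := by
    ext y; simp +contextual [ne_of_lt]
  rwa [this, pos_iff_ne_zero]

lemma mul_add_setIntegral_Iio_neg_le [IsProbabilityMeasure ν] (hint : Integrable id ν)
    (hbar : ∫ y, y ∂ν = 0) {β S t : ℝ} (hatom : ENNReal.ofReal β ≤ ν {S}) (ht : t ∈ Icc 0 S) :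
    β * (ν.real (Iio 0) * t + ∫ y in Iio 0, -y ∂ν) ≤ ∫ y in Iio 0, -y ∂ν := by
  obtain ⟨ht0, htS⟩ := ht
  have hS : 0 ≤ S := ht0.trans htS
  have hβ : β ≤ ν.real {S} := (ENNReal.ofReal_le_iff_le_toReal (measure_ne_top _ _)).1 hatom
  have hmass : ν.real (Iio 0) + ν.real {S} ≤ 1 := by
    rw [← measureReal_union (s₁ := Iio 0) (disjoint_singleton_right.2 (not_lt.2 hS))
      (measurableSet_singleton S)]
    exact measureReal_le_one
  have hmoment : S * ν.real {S} ≤ ∫ y in Iio 0, -y ∂ν := by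
    rw [← setIntegral_Ici_eq_setIntegral_Iio_neg hint hbar]
    calc S * ν.real {S} = ∫ y in {S}, y ∂ν := by rw [integral_singleton, smul_eq_mul, mul_comm]
      _ ≤ ∫ y in Ici 0, y ∂ν :=
        setIntegral_mono_set hint.integrableOn
          (ae_restrict_of_forall_mem measurableSet_Ici fun _ hy => hy)
          (singleton_subset_iff.2 hS).eventuallyLE
  have hm : 0 ≤ ν.real (Iio 0) := measureReal_nonneg
  have hb : 0 ≤ ν.real {S} := measureReal_nonneg
  have hI : 0 ≤ ∫ y in Iio 0, -y ∂ν := (mul_nonneg hS hb).trans hmoment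
  rcases le_total β 0 with hβ0 | hβ0
  · nlinarith [mul_nonpos_of_nonpos_of_nonneg hβ0 (add_nonneg (mul_nonneg hm ht0) hI)]
  · nlinarith [mul_nonneg (sub_nonneg.2 (hβ.trans (by linarith : ν.real {S} ≤ 1)))
        (sub_nonneg.2 hmoment), mul_nonneg (mul_nonneg hβ0 hm) (sub_nonneg.2 htS),
      mul_nonneg hS (sub_nonneg.2 hβ),
      mul_nonneg (mul_nonneg hβ0 hS) (by linarith : 0 ≤ 1 - ν.real (Iio 0) - ν.real {S})]

lemma isMixtureOf_isSimpleBiased_of_top_atom [IsProbabilityMeasure ν] (hint : Integrable id ν)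
    (hbar : ∫ y, y ∂ν = 0) {β S : ℝ} (hS : ν (Ioi S) = 0) (hatom : ENNReal.ofReal β ≤ ν {S})
    (hneg : ν (Iio 0) ≠ 0) : IsMixtureOf ν (IsSimpleBiased β) := by
  set η := ν.restrict (Iio 0) with hη_def
  have hη : η (Ici 0) = 0 := by
    rw [Measure.restrict_apply measurableSet_Ici, Ici_inter_Iio, Ico_self, measure_empty]
  have hI := setIntegral_Iio_neg_pos hint hneg
  have hIci := setIntegral_Ici_eq_setIntegral_Iio_neg hint hbar
  have hS0 : 0 ≤ S := by
    by_contra! hS0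
    rw [Measure.restrict_eq_zero.2 (measure_mono_null (Ici_subset_Ioi.2 hS0) hS),
      integral_zero_measure] at hIci
    linarith
  have hsupp : ∀ᵐ y ∂ν.restrict (Ici 0), y ∈ Icc 0 S := by
    filter_upwards [ae_restrict_mem measurableSet_Ici,
      ae_restrict_of_ae (measure_eq_zero_iff_ae_notMem.1 hS)] with y h0 hyS
    exact ⟨h0, not_lt.1 hyS⟩
  have hclamp : ∀ y, max 0 (min y S) ∈ Icc 0 S :=
    fun y => ⟨le_max_left _ _, max_le hS0 (min_le_right _ _)⟩
  -- clamping to `[0, S]` makes every value of `κ`, not just `ρ`-a.e. ones, simple `β`-biased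
  let κ : Kernel ℝ ℝ :=
    ⟨fun y => balancedAtom η (max 0 (min y S)), measurable_balancedAtom.comp (by fun_prop)⟩
  have : IsMarkovKernel κ := ⟨fun y => isProbabilityMeasure_balancedAtom hI (hclamp y).1⟩
  set ρ := (ν.restrict (Ici 0)).withDensity
    fun t => ENNReal.ofReal ((η.real univ * t + ∫ y, -y ∂η) / ∫ y, -y ∂η)
  have hbind : ν = ρ.bind κ := calc
    ν = ν.restrict (Ici 0) + η := by
      rw [hη_def, ← compl_Ici, Measure.restrict_add_restrict_compl measurableSet_Ici]
    _ = ρ.bind (balancedAtom η) :=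
      (bind_withDensity_balancedAtom (hsupp.mono fun _ hy => hy.1) hint.integrableOn hI hIci).symm
    _ = ρ.bind κ := Measure.bind_congr_right <|
      (withDensity_absolutelyContinuous _ _).ae_le <| hsupp.mono fun y hy => by
        simp only [κ, Kernel.coe_mk, max_eq_right hy.1, min_eq_left hy.2]
  refine ⟨ρ, ⟨?_⟩, κ, inferInstance, fun y => ?_, hbind⟩
  · rw [← Measure.comp_apply_univ (κ := κ), ← hbind, measure_univ]
  · refine isSimpleBiased_balancedAtom hint.integrableOn hη hI (hclamp y).1 ?_
    rw [measureReal_restrict_apply_univ]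
    exact mul_add_setIntegral_Iio_neg_le hint hbar hatom (hclamp y)

end CenteredMeasure

lemma isSimpleBiased_dirac_zero {β : ℝ} (hβ : ENNReal.ofReal β ≤ 1) :
    IsSimpleBiased β (Measure.dirac 0) := by
  refine ⟨inferInstance, integrable_id_dirac 0, by simp, 0, le_rfl, ?_, by simpa using hβ⟩
  rw [restrict_dirac' measurableSet_Ici, if_pos self_mem_Ici,
    Measure.dirac_apply_of_mem (mem_singleton 0), one_smul]

lemma isMixtureOf_of_isProbabilityMeasure {ν : Measure ℝ} [IsProbabilityMeasure ν]
    {P : Measure ℝ → Prop} (hν : P ν) : IsMixtureOf ν P :=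
  ⟨Measure.dirac 0, inferInstance, Kernel.const ℝ ν, inferInstance, fun _ => hν,
    (Measure.dirac_bind (Kernel.const ℝ ν).measurable 0).symm⟩

theorem stmt1_general (β : ℝ) (ν : Measure ℝ)
    (h : IsAtomicBiased β ν) : IsMixtureOf ν (IsSimpleBiased β) := by
  obtain ⟨hprob, hint, hbar, hbdd, hatom⟩ := h
  by_cases hneg : ν (Iio 0) = 0
  · have hν := eq_dirac_zero_of_measure_Iio_eq_zero hint hbar hneg
    exact isMixtureOf_of_isProbabilityMeasure
      (hν ▸ isSimpleBiased_dirac_zero (hatom.trans prob_le_one))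
  · exact isMixtureOf_isSimpleBiased_of_top_atom hint hbar (measure_Ioi_Ssup_eq_zero hbdd) hatom
      hneg

/-- every atomic `β`-biased probability is a mixture of simple
`β`-biased probabilities. -/
theorem stmt1 (β : ℝ) (hβ : β ∈ Set.Ioo (0 : ℝ) 1) (ν : Measure ℝ)
    (h : IsAtomicBiased β ν) : IsMixtureOf ν (IsSimpleBiased β) :=
  stmt1_general β ν h

end
end

section
/- Let ν be a simple β-biased probability measure on ℝ, i.e., ν is centered at 0, has finite first moment, and ν|_{[0,∞)} = γ δ_M for some M ≥ 0 and γ ≥ β. Then for every function f ∈ Ψ (continuous, antisymmetric, f(0)=0, convex on ℝ₊), we have ∫ Z^β(f) dν ≤ 0, where Z^β(f)(x) = (1/a) f(a x) for x > 0 and Z^β(f)(x) = f(x) for x ≤ 0, with a = β/(1−β). -/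
open MeasureTheory ProbabilityTheory Set

noncomputable section

/-! On `(-∞, 0)` the odd function `f` lies below the point reflection `x ↦ s x + (s p - f p)` of
a supporting line of `f` at `p = a M`, and `s p - f p ≥ 0` because that line passes below
`f 0 = 0`. Integrating, with the mean constraint `∫_{x<0} x dν = -γ M` and `ν(-∞, 0) = 1 - γ`,
bounds `∫ Z^β(f) dν` by `(1 - γ / β) (s p - f p) ≤ 0`. When `M = 0` the mean constraint forces
`ν = δ₀`. -/

lemma ConvexOn.add_rightDeriv_mul_sub_le {S : Set ℝ} {f : ℝ → ℝ} {x y : ℝ}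
    (hfc : ConvexOn ℝ S f) (hx : x ∈ interior S) (hy : y ∈ S) :
    f x + derivWithin f (Ioi x) x * (y - x) ≤ f y := by
  rcases lt_trichotomy y x with hyx | rfl | hxy
  · have hslope : slope f y x ≤ derivWithin f (Ioi x) x :=
      (hfc.slope_le_leftDeriv_of_mem_interior hy hx hyx).trans
        (hfc.leftDeriv_le_rightDeriv_of_mem_interior hx)
    rw [slope_def_field, div_le_iff₀ (sub_pos.2 hyx)] at hslope
    linarith
  · simp
  · have hslope := hfc.rightDeriv_le_slope_of_mem_interior hx hy hxy
    rw [slope_def_field, le_div_iff₀ (sub_pos.2 hxy)] at hslope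
    linarith

lemma le_affine_of_odd_of_supporting_line {f : ℝ → ℝ} (hodd : ∀ x, f (-x) = -f x)
    {p s : ℝ} (hs : ∀ y, 0 ≤ y → f p + s * (y - p) ≤ f y) {x : ℝ} (hx : x ≤ 0) :
    f x ≤ s * x + (s * p - f p) := by
  have := hs (-x) (neg_nonneg.2 hx)
  rw [hodd] at this
  linarith

section AtomOnNonneg

variable {ν : Measure ℝ} {γ M : ℝ}

lemma integral_eq_mul_add_setIntegral_Iio
    (hres : ν.restrict (Ici 0) = ENNReal.ofReal γ • Measure.dirac M) (hγ : 0 ≤ γ)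
    {g : ℝ → ℝ} (hg : Integrable g ν) :
    ∫ y, g y ∂ν = γ * g M + ∫ y in Iio 0, g y ∂ν := by
  rw [← integral_add_compl measurableSet_Ici hg, compl_Ici, hres, integral_smul_measure,
    integral_dirac, ENNReal.toReal_ofReal hγ, smul_eq_mul]

lemma measureReal_Iio_eq_one_sub [IsProbabilityMeasure ν]
    (hres : ν.restrict (Ici 0) = ENNReal.ofReal γ • Measure.dirac M) (hγ : 0 ≤ γ) :
    ν.real (Iio 0) = 1 - γ := by
  have := integral_eq_mul_add_setIntegral_Iio hres hγ (integrable_const (1 : ℝ))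
  simp only [integral_const, measureReal_restrict_apply_univ, probReal_univ, smul_eq_mul,
    mul_one] at this
  linarith

lemma setIntegral_Iio_id_eq_neg_mul
    (hres : ν.restrict (Ici 0) = ENNReal.ofReal γ • Measure.dirac M) (hγ : 0 ≤ γ)
    (hint : Integrable id ν) (hbar : ∫ y, y ∂ν = 0) :
    ∫ y in Iio 0, y ∂ν = -(γ * M) := by
  have := integral_eq_mul_add_setIntegral_Iio hres hγ hint
  simp only [id] at this
  linarith

end AtomOnNonneg

lemma measure_Iio_eq_zero_of_setIntegral_id_eq_zero {ν : Measure ℝ}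
    (hint : IntegrableOn id (Iio 0) ν) (h : ∫ y in Iio 0, y ∂ν = 0) : ν (Iio 0) = 0 := by
  by_contra hne
  have hpos : 0 < ∫ y in Iio 0, -y ∂ν := by
    refine (setIntegral_pos_iff_support_of_nonneg_ae (f := fun y => -y) ?_ hint.neg).2 ?_
    · filter_upwards [ae_restrict_mem measurableSet_Iio] with y (hy : y < 0)
      simp only [Pi.zero_apply]
      linarith
    · have : (Function.support fun y : ℝ => -y) ∩ Iio 0 = Iio 0 :=
        inter_eq_right.2 fun y (hy : y < 0) => neg_ne_zero.2 hy.ne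
      rwa [this, pos_iff_ne_zero]
  rw [integral_neg, h, neg_zero] at hpos
  exact hpos.false

lemma setIntegral_Iio_le_of_le_affine {ν : Measure ℝ} [IsFiniteMeasure ν] {g : ℝ → ℝ}
    {s c : ℝ} (hg : IntegrableOn g (Iio 0) ν) (hint : IntegrableOn id (Iio 0) ν)
    (hle : ∀ x < 0, g x ≤ s * x + c) :
    ∫ x in Iio 0, g x ∂ν ≤ s * ∫ x in Iio 0, x ∂ν + c * ν.real (Iio 0) := by
  have hlin : IntegrableOn (fun x => s * x) (Iio 0) ν := hint.const_mul s
  calc ∫ x in Iio 0, g x ∂ν ≤ ∫ x in Iio 0, (s * x + c) ∂ν :=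
        setIntegral_mono_on hg (hlin.add (integrableOn_const (measure_ne_top _ _)))
          measurableSet_Iio hle
    _ = s * ∫ x in Iio 0, x ∂ν + c * ν.real (Iio 0) := by
        rw [integral_add hlin (integrable_const _), integral_const_mul, setIntegral_const,
          smul_eq_mul, mul_comm c]

theorem stmt2_general (β : ℝ) (hβ : β ∈ Set.Ioo (0 : ℝ) 1) (ν : Measure ℝ)
    (hprob : IsProbabilityMeasure ν) (hint : Integrable id ν)
    (hbar : (∫ y, y ∂ν) = 0) (M γ : ℝ) (hM : 0 ≤ M) (hγ : β ≤ γ)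
    (hres : ν.restrict (Set.Ici 0) = ENNReal.ofReal γ • Measure.dirac M)
    (f : ℝ → ℝ) (hf0 : f 0 = 0)
    (hanti : ∀ x, f (-x) = -f x) (hconv : ConvexOn ℝ (Set.Ici 0) f)
    (hZint : Integrable (Zbeta β f) ν) :
    ∫ y, Zbeta β f y ∂ν ≤ 0 := by
  obtain ⟨hβ0, hβ1⟩ := hβ
  have hγ0 : 0 ≤ γ := hβ0.le.trans hγ
  have hmean := setIntegral_Iio_id_eq_neg_mul hres hγ0 hint hbar
  have hZneg : ∀ x ≤ 0, Zbeta β f x = f x := fun x hx => if_neg hx.not_gt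
  rw [integral_eq_mul_add_setIntegral_Iio hres hγ0 hZint]
  rcases hM.eq_or_lt with rfl | hMpos
  · have hnull : ν (Iio 0) = 0 :=
      measure_Iio_eq_zero_of_setIntegral_id_eq_zero hint.integrableOn (by simpa using hmean)
    simp [Measure.restrict_eq_zero.2 hnull, hZneg, hf0]
  set p := β / (1 - β) * M
  have hp : p ∈ interior (Ici 0) := by
    rw [interior_Ici]
    exact mul_pos (div_pos hβ0 (sub_pos.2 hβ1)) hMpos
  set s := derivWithin f (Ioi p) p
  have hs : ∀ y, 0 ≤ y → f p + s * (y - p) ≤ f y := fun y hy =>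
    hconv.add_rightDeriv_mul_sub_le hp hy
  have hgap : 0 ≤ s * p - f p := by linarith [hs 0 le_rfl]
  have hZM : Zbeta β f M = (1 - β) / β * f p := if_pos hMpos
  have hbound := setIntegral_Iio_le_of_le_affine hZint.integrableOn hint.integrableOn
    fun x hx => (hZneg x hx.le).trans_le (le_affine_of_odd_of_supporting_line hanti hs hx.le)
  rw [hmean, measureReal_Iio_eq_one_sub hres hγ0] at hbound
  calc γ * Zbeta β f M + ∫ x in Iio 0, Zbeta β f x ∂ν
      ≤ γ * ((1 - β) / β * f p) + (s * (-(γ * M)) + (s * p - f p) * (1 - γ)) := by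
        rw [hZM]
        exact add_le_add_right hbound _
    _ = -((γ - β) / β) * (s * p - f p) := by
        have : 1 - β ≠ 0 := (sub_pos.2 hβ1).ne'
        simp only [p]
        field_simp
        ring
    _ ≤ 0 :=
        mul_nonpos_of_nonpos_of_nonneg (neg_nonpos.2 (div_nonneg (sub_nonneg.2 hγ) hβ0.le)) hgap

/-- if `ν` is simple `β`-biased with `ν|_{[0,∞)} = γ δ_M`, `γ ≥ β`,
then `∫ Z^β(f) dν ≤ 0` for every `f ∈ Ψ`. -/
theorem stmt2 (β : ℝ) (hβ : β ∈ Set.Ioo (0 : ℝ) 1) (ν : Measure ℝ)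
    (hprob : IsProbabilityMeasure ν) (hint : Integrable id ν)
    (hbar : (∫ y, y ∂ν) = 0) (M γ : ℝ) (hM : 0 ≤ M) (hγ : β ≤ γ)
    (hres : ν.restrict (Set.Ici 0) = ENNReal.ofReal γ • Measure.dirac M)
    (f : ℝ → ℝ) (hf : Continuous f) (hf0 : f 0 = 0)
    (hanti : ∀ x, f (-x) = -f x) (hconv : ConvexOn ℝ (Set.Ici 0) f)
    (hZint : Integrable (Zbeta β f) ν) :
    ∫ y, Zbeta β f y ∂ν ≤ 0 :=
  stmt2_general β hβ ν hprob hint hbar M γ hM hγ hres f hf0 hanti hconv hZint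
end
end

section
/- Let ν be a probability measure on ℝ with finite first moment and barycenter 0, and β ∈ (0,1), a = β/(1−β). If ∫ φ dν^R ≤ a ∫ φ d(R^β_# ν^L) for all convex functions φ : [0,∞) → ℝ with φ(0) = 0 (where ν^L = ν|_{(-∞,0)}, ν^R = ν|_{[0,∞)}, and R^β(x) = −a x for x ≥ 0 and −x/a for x ≤ 0), then the total masses satisfy ‖ν^R‖ ≥ a ‖ν^L‖. -/
open MeasureTheory ProbabilityTheory Set

noncomputable section

/-! Test the hypothesis against the ramps `x ↦ max (-t x) (-1)`: they are convex, vanish at `0`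
and take values in `[-1, 0]` on `[0, ∞)`, so their `ν^R`-integrals are at least `-‖ν^R‖`. Since
`R^β` maps `(-∞, 0)` into `(0, ∞)`, where the ramps tend to `-1` as `t → ∞`, dominated convergence
sends their `R^β_# ν^L`-integrals to `-‖ν^L‖`. -/

open Filter Topology

def negRamp (t x : ℝ) : ℝ := max (-t * x) (-1)

lemma continuous_negRamp (t : ℝ) : Continuous (negRamp t) :=
  (continuous_const.mul continuous_id).max continuous_const

lemma convexOn_negRamp (t : ℝ) : ConvexOn ℝ univ (negRamp t) :=
  (((-t) • LinearMap.id : ℝ →ₗ[ℝ] ℝ).convexOn convex_univ).sup (convexOn_const _ convex_univ)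

lemma negRamp_zero (t : ℝ) : negRamp t 0 = 0 := by simp [negRamp]

lemma neg_one_le_negRamp (t x : ℝ) : -1 ≤ negRamp t x := le_max_right _ _

lemma abs_negRamp_le_one {t x : ℝ} (ht : 0 ≤ t) (hx : 0 ≤ x) : |negRamp t x| ≤ 1 :=
  abs_le.2 ⟨neg_one_le_negRamp t x, max_le (by nlinarith) (by norm_num)⟩

lemma tendsto_negRamp {x : ℝ} (hx : 0 < x) :
    Tendsto (fun n : ℕ => negRamp n x) atTop (𝓝 (-1)) := by
  refine tendsto_const_nhds.congr' ?_
  filter_upwards [eventually_ge_atTop ⌈1 / x⌉₊] with n hn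
  have : 1 ≤ (n : ℝ) * x := by
    rw [← div_le_iff₀ hx]; exact (Nat.le_ceil _).trans (by exact_mod_cast hn)
  exact (max_eq_right (by linarith)).symm

section

variable {μ : Measure ℝ} [IsFiniteMeasure μ]

lemma integrable_negRamp {t : ℝ} (ht : 0 ≤ t) (hμ : ∀ᵐ x ∂μ, 0 ≤ x) :
    Integrable (negRamp t) μ :=
  (integrable_const 1).mono' (continuous_negRamp t).aestronglyMeasurable
    (hμ.mono fun _ hx => abs_negRamp_le_one ht hx)

lemma neg_measureReal_univ_le_integral_negRamp {t : ℝ} (ht : 0 ≤ t) (hμ : ∀ᵐ x ∂μ, 0 ≤ x) :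
    -μ.real univ ≤ ∫ x, negRamp t x ∂μ := by
  simpa using integral_mono (integrable_const (-1)) (integrable_negRamp ht hμ)
    (neg_one_le_negRamp t)

lemma tendsto_integral_negRamp (hμ : ∀ᵐ x ∂μ, 0 < x) :
    Tendsto (fun n : ℕ => ∫ x, negRamp n x ∂μ) atTop (𝓝 (-μ.real univ)) := by
  have hlim : ∫ _, (-1 : ℝ) ∂μ = -μ.real univ := by simp
  rw [← hlim]
  refine tendsto_integral_of_dominated_convergence (fun _ => 1)
    (fun n => (continuous_negRamp n).aestronglyMeasurable) (integrable_const 1)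
    (fun n => hμ.mono fun _ hx => abs_negRamp_le_one n.cast_nonneg hx.le) ?_
  exact hμ.mono fun _ hx => tendsto_negRamp hx

theorem mul_measureReal_univ_le_of_integral_convexOn_le {ρ : Measure ℝ} [IsFiniteMeasure ρ]
    (hμ : ∀ᵐ x ∂μ, 0 ≤ x) (hρ : ∀ᵐ x ∂ρ, 0 < x) (c : ℝ)
    (h : ∀ φ : ℝ → ℝ, ConvexOn ℝ (Ici 0) φ → φ 0 = 0 → Integrable φ μ → Integrable φ ρ →
      ∫ x, φ x ∂μ ≤ c * ∫ x, φ x ∂ρ) :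
    c * ρ.real univ ≤ μ.real univ := by
  have hbound (n : ℕ) : -μ.real univ ≤ c * ∫ x, negRamp n x ∂ρ :=
    (neg_measureReal_univ_le_integral_negRamp n.cast_nonneg hμ).trans <|
      h _ ((convexOn_negRamp n).subset (subset_univ _) (convex_Ici 0)) (negRamp_zero n)
        (integrable_negRamp n.cast_nonneg hμ)
        (integrable_negRamp n.cast_nonneg (hρ.mono fun _ hx => hx.le))
  have := ge_of_tendsto' ((tendsto_integral_negRamp hρ).const_mul c) hbound
  linarith

end

lemma measurable_Rbeta (β : ℝ) : Measurable (Rbeta β) :=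
  Measurable.ite (measurableSet_le measurable_const measurable_id)
    (measurable_const.mul measurable_id) (measurable_const.mul measurable_id)

lemma Rbeta_pos {β x : ℝ} (hβ : β ∈ Ioo (0 : ℝ) 1) (hx : x < 0) : 0 < Rbeta β x := by
  have hc : 0 < (1 - β) / β := div_pos (by linarith [hβ.2]) hβ.1
  simp only [Rbeta, if_neg hx.not_ge]
  nlinarith

theorem stmt4_general (β : ℝ) (hβ : β ∈ Set.Ioo (0 : ℝ) 1) (ν : Measure ℝ)
    (hprob : IsProbabilityMeasure ν)
    (h : ∀ φ : ℝ → ℝ, ConvexOn ℝ (Set.Ici 0) φ → φ 0 = 0 →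
      Integrable φ (ν.restrict (Set.Ici 0)) →
      Integrable φ ((ν.restrict (Set.Iio 0)).map (Rbeta β)) →
      ∫ y, φ y ∂(ν.restrict (Set.Ici 0)) ≤
        (β / (1 - β)) * ∫ y, φ y ∂((ν.restrict (Set.Iio 0)).map (Rbeta β))) :
    (β / (1 - β)) * (ν (Set.Iio 0)).toReal ≤ (ν (Set.Ici 0)).toReal := by
  have hR : Measurable (Rbeta β) := measurable_Rbeta β
  have hpos : ∀ᵐ y ∂(ν.restrict (Iio 0)).map (Rbeta β), 0 < y :=
    (ae_map_iff hR.aemeasurable measurableSet_Ioi).2 <|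
      (ae_restrict_mem measurableSet_Iio).mono fun _ hx => Rbeta_pos hβ hx
  have := mul_measureReal_univ_le_of_integral_convexOn_le (μ := ν.restrict (Ici 0))
    (ae_restrict_mem measurableSet_Ici) hpos _ h
  simpa [Measure.real, Measure.map_apply hR MeasurableSet.univ] using this

/-- if `∫ φ dν^R ≤ a ∫ φ d(R^β_# ν^L)` for all convex `φ` on `[0,∞)`
with `φ(0)=0`, then `‖ν^R‖ ≥ a ‖ν^L‖`. -/
theorem stmt4 (β : ℝ) (hβ : β ∈ Set.Ioo (0 : ℝ) 1) (ν : Measure ℝ)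
    (hprob : IsProbabilityMeasure ν) (hint : Integrable id ν)
    (hbar : (∫ y, y ∂ν) = 0)
    (h : ∀ φ : ℝ → ℝ, ConvexOn ℝ (Set.Ici 0) φ → φ 0 = 0 →
      Integrable φ (ν.restrict (Set.Ici 0)) →
      Integrable φ ((ν.restrict (Set.Iio 0)).map (Rbeta β)) →
      ∫ y, φ y ∂(ν.restrict (Set.Ici 0)) ≤
        (β / (1 - β)) * ∫ y, φ y ∂((ν.restrict (Set.Iio 0)).map (Rbeta β))) :
    (β / (1 - β)) * (ν (Set.Iio 0)).toReal ≤ (ν (Set.Ici 0)).toReal :=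
  stmt4_general β hβ ν hprob h

end
end

section
/- Let ν ∈ 𝒫₁(ℝ) be symmetric about its barycenter x (i.e. the reflection y ↦ 2x − y maps ν to itself) and ν ≠ δ_x. Then ν is 1/2-biased around x, but for every β > 1/2, ν is not β-biased around x. -/
open MeasureTheory ProbabilityTheory Set

noncomputable section

/-!
After centering at `x`, a symmetric law `μ` is the mixture, over `y ∼ μ`, of the atomic
`1/2`-biased laws `½δ_y + ½δ_{-y}`. Conversely, an atomic `β`-biased law `η` satisfies
`β η(-∞, 0) ≤ (1 - β) η(0, ∞)`: either its top atom is at `0` and then `η` has no negative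
part, or that atom of mass `≥ β` lies in `(0, ∞)` and the negative part has mass `≤ 1 - β`.
The inequality passes to mixtures, and for a symmetric law with `β > 1/2` it forces
`μ(-∞, 0) = μ(0, ∞) = 0`, i.e. `ν = δ_x`.
-/

open scoped ENNReal

lemma measure_compl_msupp (η : Measure ℝ) : η (msupp η)ᶜ = 0 := by
  refine measure_null_of_locally_null _ fun z hz => ?_
  obtain ⟨ε, hε, hzero⟩ : ∃ ε > 0, η (Metric.ball z ε) ≤ 0 := by simpa [msupp] using hz
  exact ⟨Metric.ball z ε, mem_nhdsWithin_of_mem_nhds (Metric.ball_mem_nhds z hε),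
    le_antisymm hzero zero_le⟩

lemma ae_le_Ssup {η : Measure ℝ} (hbdd : BddAbove (msupp η)) : ∀ᵐ y ∂η, y ≤ Ssup η :=
  measure_mono_null (fun _ hy hmem => hy (le_csSup hbdd hmem)) (measure_compl_msupp η)

lemma msupp_subset_of_measure_compl_eq_zero {η : Measure ℝ} {s : Set ℝ} (hs : IsClosed s)
    (hnull : η sᶜ = 0) : msupp η ⊆ s := by
  intro z hz
  by_contra hzs
  obtain ⟨ε, hε, hball⟩ := Metric.isOpen_iff.mp hs.isOpen_compl z hzs
  exact (hz ε hε).ne' (measure_mono_null hball hnull)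

lemma mem_msupp_of_measure_singleton_pos {η : Measure ℝ} {a : ℝ} (h : 0 < η {a}) :
    a ∈ msupp η := fun _ hε =>
  h.trans_le (measure_mono (singleton_subset_iff.mpr (Metric.mem_ball_self hε)))

lemma IsAtomicBiased.ofReal_mul_measure_Iio_le {β : ℝ} {η : Measure ℝ} (hβ : 0 ≤ β)
    (h : IsAtomicBiased β η) :
    ENNReal.ofReal β * η (Iio 0) ≤ ENNReal.ofReal (1 - β) * η (Ioi 0) := by
  obtain ⟨hprob, hint, hmean, hbdd, hatom⟩ := h
  have hle : ∀ᵐ y ∂η, y ≤ Ssup η := ae_le_Ssup hbdd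
  have hS : 0 ≤ Ssup η := by
    simpa [hmean] using integral_mono_ae hint (integrable_const (Ssup η)) hle
  rcases hS.eq_or_lt with hS | hS
  · have hnonneg : 0 ≤ᵐ[η] fun y => -y := by
      filter_upwards [hle] with y hy using neg_nonneg.mpr (hS ▸ hy)
    have hzero : (fun y => -y) =ᵐ[η] 0 :=
      (integral_eq_zero_iff_of_nonneg_ae hnonneg hint.neg).mp
        (by rw [integral_neg, hmean, neg_zero])
    have hIio : η (Iio 0) = 0 :=
      measure_mono_null (fun y (hy : y < 0) => by simpa using hy.ne) (ae_iff.mp hzero)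
    simp [hIio]
  · have hIoi : ENNReal.ofReal β ≤ η (Ioi 0) :=
      hatom.trans (measure_mono (singleton_subset_iff.mpr hS))
    have hIio : η (Iio 0) ≤ ENNReal.ofReal (1 - β) := by
      calc η (Iio 0) ≤ η {Ssup η}ᶜ :=
            measure_mono fun y (hy : y < 0) (hyS : y = Ssup η) => by linarith
        _ = 1 - η {Ssup η} := prob_compl_eq_one_sub (measurableSet_singleton _)
        _ ≤ 1 - ENNReal.ofReal β := tsub_le_tsub_left hatom 1
        _ = ENNReal.ofReal (1 - β) := by rw [ENNReal.ofReal_sub 1 hβ, ENNReal.ofReal_one]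
    calc ENNReal.ofReal β * η (Iio 0) ≤ η (Ioi 0) * ENNReal.ofReal (1 - β) :=
          mul_le_mul' hIoi hIio
      _ = _ := mul_comm _ _

lemma IsBiased.ofReal_mul_measure_Iio_le {β : ℝ} {μ : Measure ℝ} (hβ : 0 ≤ β)
    (h : IsBiased β μ) :
    ENNReal.ofReal β * μ (Iio 0) ≤ ENNReal.ofReal (1 - β) * μ (Ioi 0) := by
  obtain ⟨ρ, -, κ, -, hκ, rfl⟩ := h
  simp only [Measure.bind_apply measurableSet_Iio κ.aemeasurable,
    Measure.bind_apply measurableSet_Ioi κ.aemeasurable]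
  rw [← lintegral_const_mul' _ _ ENNReal.ofReal_ne_top,
    ← lintegral_const_mul' _ _ ENNReal.ofReal_ne_top]
  exact lintegral_mono fun z => (hκ z).ofReal_mul_measure_Iio_le hβ

lemma IsBiasedAround.ofReal_mul_measure_Iio_le {β x : ℝ} {ν : Measure ℝ} (hβ : 0 ≤ β)
    (h : IsBiasedAround β x ν) :
    ENNReal.ofReal β * ν (Iio x) ≤ ENNReal.ofReal (1 - β) * ν (Ioi x) := by
  have hmeas : Measurable fun y : ℝ => y - x := measurable_sub_const x
  have key := IsBiased.ofReal_mul_measure_Iio_le hβ h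
  rwa [Measure.map_apply hmeas measurableSet_Iio, Measure.map_apply hmeas measurableSet_Ioi,
    preimage_sub_const_Iio, preimage_sub_const_Ioi, zero_add] at key

def symmetrizingKernel : Kernel ℝ ℝ where
  toFun y := (2⁻¹ : ℝ≥0∞) • (Measure.dirac y + Measure.dirac (-y))
  measurable' := Measure.measurable_of_measurable_coe _ fun s hs => by
    have hδ := Measure.measurable_coe hs |>.comp (Measure.measurable_dirac (α := ℝ))
    simpa only [Measure.smul_apply, Measure.add_apply, smul_eq_mul, Pi.add_apply,
      Function.comp_apply] using (hδ.add (hδ.comp measurable_neg)).const_mul 2⁻¹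

lemma symmetrizingKernel_apply (y : ℝ) :
    symmetrizingKernel y = (2⁻¹ : ℝ≥0∞) • (Measure.dirac y + Measure.dirac (-y)) := rfl

instance : IsMarkovKernel symmetrizingKernel :=
  ⟨fun y => ⟨by simp [symmetrizingKernel_apply, ENNReal.inv_two_add_inv_two]⟩⟩

lemma bind_symmetrizingKernel (μ : Measure ℝ) :
    μ.bind symmetrizingKernel = (2⁻¹ : ℝ≥0∞) • (μ + μ.map Neg.neg) := by
  ext s hs
  have hind : Measurable (s.indicator (1 : ℝ → ℝ≥0∞)) := measurable_one.indicator hs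
  simp only [Measure.bind_apply hs symmetrizingKernel.aemeasurable, symmetrizingKernel_apply,
    Measure.smul_apply, Measure.add_apply, Measure.dirac_apply' _ hs, smul_eq_mul, mul_add]
  rw [lintegral_add_left (hind.const_mul _), lintegral_const_mul' _ _ (by simp),
    lintegral_const_mul' _ _ (by simp), ← lintegral_map hind measurable_neg,
    lintegral_indicator_one hs, lintegral_indicator_one hs]

lemma isAtomicBiased_symmetrizingKernel (y : ℝ) :
    IsAtomicBiased (1 / 2) (symmetrizingKernel y) := by
  have hsupp : msupp (symmetrizingKernel y) ⊆ {y, -y} :=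
    msupp_subset_of_measure_compl_eq_zero (Set.toFinite _).isClosed
      (by simp [symmetrizingKernel_apply])
  have hatom : (2⁻¹ : ℝ≥0∞) ≤ symmetrizingKernel y {|y|} := by
    rcases abs_choice y with h | h <;> simp [symmetrizingKernel_apply, h]
  have hS : Ssup (symmetrizingKernel y) = |y| := by
    refine IsGreatest.csSup_eq ⟨mem_msupp_of_measure_singleton_pos
      ((ENNReal.inv_pos.mpr ENNReal.ofNat_ne_top).trans_le hatom), fun z hz => ?_⟩
    rcases hsupp hz with rfl | rfl
    exacts [le_abs_self _, neg_le_abs _]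
  have hδ (a : ℝ) : Integrable id (Measure.dirac a) := integrable_dirac (by simp)
  refine ⟨inferInstance, ((hδ y).add_measure (hδ (-y))).smul_measure (by simp), ?_,
    (Set.toFinite _).bddAbove.mono hsupp, ?_⟩
  · change ∫ z, id z ∂symmetrizingKernel y = 0
    rw [symmetrizingKernel_apply, integral_smul_measure, integral_add_measure (hδ y) (hδ (-y)),
      integral_dirac, integral_dirac, id, id, add_neg_cancel, smul_zero]
  · rwa [hS, one_div, ENNReal.ofReal_inv_of_pos two_pos, ENNReal.ofReal_ofNat]

lemma isBiased_half_of_map_neg_eq {μ : Measure ℝ} [IsProbabilityMeasure μ]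
    (hμ : μ.map Neg.neg = μ) : IsBiased (1 / 2) μ := by
  refine ⟨μ, inferInstance, symmetrizingKernel, inferInstance,
    isAtomicBiased_symmetrizingKernel, ?_⟩
  rw [bind_symmetrizingKernel, hμ, ← two_smul ℝ≥0∞ μ, smul_smul,
    ENNReal.inv_mul_cancel two_ne_zero ENNReal.ofNat_ne_top, one_smul]

lemma eq_dirac_of_measure_Iio_eq_zero_of_measure_Ioi_eq_zero {ν : Measure ℝ}
    [IsProbabilityMeasure ν] {x : ℝ} (hlt : ν (Iio x) = 0) (hgt : ν (Ioi x) = 0) :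
    ν = Measure.dirac x := by
  have hcompl : ν {x}ᶜ = 0 :=
    measure_mono_null (fun y (hy : y ≠ x) => hy.lt_or_gt) (measure_union_null hlt hgt)
  have hx : ν {x} = 1 := (prob_compl_eq_zero_iff (measurableSet_singleton x)).mp hcompl
  calc ν = ν.restrict {x} := (Measure.restrict_eq_self_of_ae_mem hcompl).symm
    _ = Measure.dirac x := by rw [Measure.restrict_singleton, hx, one_smul]

theorem stmt6_general (x : ℝ) (ν : Measure ℝ) (hprob : IsProbabilityMeasure ν)
    (hsym : ν.map (fun y => 2 * x - y) = ν) (hne : ν ≠ Measure.dirac x) :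
    IsBiasedAround (1 / 2) x ν ∧
      ∀ β : ℝ, 1 / 2 < β → ¬ IsBiasedAround β x ν := by
  have hmeas : Measurable fun y : ℝ => y - x := measurable_sub_const x
  have hneg : (ν.map (· - x)).map Neg.neg = ν.map (· - x) := by
    conv_rhs => rw [← hsym]
    rw [Measure.map_map measurable_neg hmeas, Measure.map_map hmeas (by fun_prop)]
    congr 1 with y
    simp only [Function.comp_apply]
    ring
  have hIoi : ν (Ioi x) = ν (Iio x) := by
    conv_lhs => rw [← hsym]
    rw [Measure.map_apply (by fun_prop) measurableSet_Ioi]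
    congr 1 with y
    simp only [mem_preimage, mem_Ioi, mem_Iio]
    constructor <;> intro h <;> linarith
  have := Measure.isProbabilityMeasure_map (μ := ν) hmeas.aemeasurable
  refine ⟨isBiased_half_of_map_neg_eq hneg, fun β hβ hbiased => hne ?_⟩
  have hbalance := hbiased.ofReal_mul_measure_Iio_le (by linarith)
  rw [hIoi] at hbalance
  have hlt : ENNReal.ofReal (1 - β) < ENNReal.ofReal β :=
    (ENNReal.ofReal_lt_ofReal_iff (by linarith)).mpr (by linarith)
  have hIio : ν (Iio x) = 0 := by
    by_contra hpos
    exact hlt.not_ge ((ENNReal.mul_le_mul_iff_left hpos (measure_ne_top ν _)).mp hbalance)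
  exact eq_dirac_of_measure_Iio_eq_zero_of_measure_Ioi_eq_zero hIio (hIoi.trans hIio)

/-- a measure symmetric about its barycenter `x`, different from `δ_x`,
is `1/2`-biased around `x` but not `β`-biased around `x` for any `β > 1/2`. -/
theorem stmt6 (x : ℝ) (ν : Measure ℝ) (hprob : IsProbabilityMeasure ν)
    (hint : Integrable id ν) (hbar : (∫ y, y ∂ν) = x)
    (hsym : ν.map (fun y => 2 * x - y) = ν) (hne : ν ≠ Measure.dirac x) :
    IsBiasedAround (1 / 2) x ν ∧
      ∀ β : ℝ, 1 / 2 < β → ¬ IsBiasedAround β x ν :=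
  stmt6_general x ν hprob hsym hne

end
end

section
/- Let ν ∈ 𝒫₁(ℝ) with s(ν) := inf supp(ν) > −∞ and S(ν) := sup supp(ν) = +∞. Then for every β ∈ (0,1), ν is not β-biased around its barycenter. -/
open MeasureTheory ProbabilityTheory Set

noncomputable section

/-! An atomic `β`-biased law with mean `0`, carried by `[m, ∞)` with `m ≤ 0`, has an atom of
mass `p ≥ β` at `S = sup supp`, so `0 = ∫ y ≥ p S + (1 - p) m`, which forces
`S ≤ -m (1 - β) / β`. This a.e. upper bound passes to mixtures and, after translation, shows
that a law `β`-biased around `x` whose support is bounded below by `s ≤ x` has support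
bounded above by `x / β - s (1 - β) / β`. -/

lemma msupp_eq_support (ν : Measure ℝ) : msupp ν = ν.support := by
  ext x
  exact (Metric.nhds_basis_ball.mem_measureSupport).symm

lemma msupp_mem_ae (ν : Measure ℝ) : msupp ν ∈ ae ν :=
  msupp_eq_support ν ▸ Measure.support_mem_ae

lemma mem_upperBounds_msupp_of_ae_le {ν : Measure ℝ} {c : ℝ} (h : ∀ᵐ y ∂ν, y ≤ c) :
    c ∈ upperBounds (msupp ν) := by
  rw [msupp_eq_support]
  exact Measure.support_subset_of_isClosed isClosed_Iic h

lemma add_mul_le_integral_of_ae_ge {μ : Measure ℝ} [IsProbabilityMeasure μ]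
    (hμ : Integrable id μ) {m : ℝ} (hm : ∀ᵐ y ∂μ, m ≤ y) (a : ℝ) :
    μ.real {a} * a + (1 - μ.real {a}) * m ≤ ∫ y, y ∂μ := by
  have hcompl : (1 - μ.real {a}) * m ≤ ∫ y in {a}ᶜ, y ∂μ := by
    calc (1 - μ.real {a}) * m = ∫ _ in {a}ᶜ, m ∂μ := by
          rw [setIntegral_const, probReal_compl_eq_one_sub (measurableSet_singleton a),
            smul_eq_mul]
      _ ≤ ∫ y in {a}ᶜ, y ∂μ :=
          integral_mono_ae (integrable_const m) hμ.integrableOn (ae_restrict_of_ae hm)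
  rw [← integral_add_compl (f := fun y => y) (measurableSet_singleton a) hμ, integral_singleton,
    smul_eq_mul]
  linarith

lemma IsAtomicBiased.ae_le {β m : ℝ} {μ : Measure ℝ} (h : IsAtomicBiased β μ) (hβ : 0 < β)
    (hm : m ≤ 0) (hlow : ∀ᵐ y ∂μ, m ≤ y) : ∀ᵐ y ∂μ, y ≤ -m * (1 - β) / β := by
  obtain ⟨hprob, hμ, hmean, hbdd, hatom⟩ := h
  set S := Ssup μ
  have hβp : β ≤ μ.real {S} :=
    (ENNReal.ofReal_le_iff_le_toReal (measure_ne_top μ _)).1 hatom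
  have hp1 : μ.real {S} ≤ 1 := measureReal_le_one
  have hbalance := hmean ▸ add_mul_le_integral_of_ae_ge hμ hlow S
  have hS : S ≤ -m * (1 - β) / β := by
    rw [le_div_iff₀ hβ]
    rcases le_or_gt m S with hmS | hSm <;> nlinarith
  filter_upwards [msupp_mem_ae μ] with y hy
  exact (le_csSup hbdd hy).trans hS

lemma IsBiased.ae_le {β m : ℝ} {μ : Measure ℝ} (h : IsBiased β μ) (hβ : 0 < β)
    (hm : m ≤ 0) (hlow : ∀ᵐ y ∂μ, m ≤ y) : ∀ᵐ y ∂μ, y ≤ -m * (1 - β) / β := by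
  obtain ⟨ρ, -, κ, -, hκ, rfl⟩ := h
  refine Measure.ae_comp_of_ae_ae (κ := κ) measurableSet_Iic ?_
  filter_upwards [Measure.ae_ae_of_ae_comp (κ := κ) hlow] with a ha
  exact (hκ a).ae_le hβ hm ha

lemma IsBiasedAround.ae_le {β x s : ℝ} {ν : Measure ℝ} (h : IsBiasedAround β x ν) (hβ : 0 < β)
    (hs : s ≤ x) (hlow : ∀ᵐ y ∂ν, s ≤ y) : ∀ᵐ y ∂ν, y ≤ x / β - s * (1 - β) / β := by
  have hf : AEMeasurable (fun y => y - x) ν := (measurable_id.sub_const x).aemeasurable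
  have hlow' : ∀ᵐ z ∂ν.map (fun y => y - x), s - x ≤ z := by
    rw [ae_map_iff hf measurableSet_Ici]
    filter_upwards [hlow] with y hy
    linarith
  have hup := (ae_map_iff hf measurableSet_Iic).1 (IsBiased.ae_le h hβ (by linarith) hlow')
  filter_upwards [hup] with y hy
  have : -(s - x) * (1 - β) / β + x = x / β - s * (1 - β) / β := by field_simp; ring
  linarith

theorem stmt8_general (ν : Measure ℝ) (hbdd : BddBelow (msupp ν))
    (hub : ¬ BddAbove (msupp ν)) :
    ∀ β : ℝ, β ∈ Set.Ioo (0 : ℝ) 1 → ¬ IsBiasedAround β (∫ y, y ∂ν) ν := by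
  rintro β ⟨hβ, -⟩ hbias
  obtain ⟨c, hc⟩ := hbdd
  have hlow : ∀ᵐ y ∂ν, min c (∫ y, y ∂ν) ≤ y := by
    filter_upwards [msupp_mem_ae ν] with y hy
    exact (min_le_left _ _).trans (hc hy)
  exact hub ⟨_, mem_upperBounds_msupp_of_ae_le (hbias.ae_le hβ (min_le_right _ _) hlow)⟩

/-- if `s(ν) > -∞` and `S(ν) = +∞` then `ν` is not `β`-biased around
its barycenter for any `β ∈ (0,1)`. -/
theorem stmt8 (ν : Measure ℝ) (hprob : IsProbabilityMeasure ν)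
    (hint : Integrable id ν) (hbdd : BddBelow (msupp ν))
    (hub : ¬ BddAbove (msupp ν)) :
    ∀ β : ℝ, β ∈ Set.Ioo (0 : ℝ) 1 → ¬ IsBiasedAround β (∫ y, y ∂ν) ν :=
  stmt8_general ν hbdd hub
end
end
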